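/- With A, X, 𝕋 as above: let p ∈ (0,1) and θ ≥ 0, and suppose f : A → X satisfies ‖μf((x+y+z)/3) + μf((x−2y+z)/3) + μf((x+y−2z)/3) − f(μx)‖ ≤ θ(‖x‖^p + ‖y‖^p + ‖z‖^p) and ‖f([a,b,c]) − [f(a),b,c] − [a,f(b),c] − [a,b,f(c)]‖ ≤ θ(‖a‖^p + ‖b‖^p + ‖c‖^p) for all μ ∈ 𝕋 and all x,y,z,a,b,c ∈ A. Then there exists a unique ternary derivation D : A → X with ‖f(x) − D(x)‖ ≤ (2^p·θ/(2 − 2^p))·‖x‖^p for all x ∈ A. -/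

import Mathlib

/-- A Banach ternary algebra `A` together with a ternary Banach `A`-module `X`:
a trilinear bounded ternary product on `A` and the three trilinear bounded
module actions of `A` on `X`. -/
structure TernarySystem (A X : Type*)
    [NormedAddCommGroup A] [NormedSpace ℂ A]
    [NormedAddCommGroup X] [NormedSpace ℂ X] where
  tA : A → A → A → A
  m1 : X → A → A → X
  m2 : A → X → A → X
  m3 : A → A → X → X
  tA_lin1 : ∀ b c, IsLinearMap ℂ fun a => tA a b c
  tA_lin2 : ∀ a c, IsLinearMap ℂ fun b => tA a b c
  tA_lin3 : ∀ a b, IsLinearMap ℂ fun c => tA a b c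
  m1_lin1 : ∀ b c, IsLinearMap ℂ fun u => m1 u b c
  m1_lin2 : ∀ u c, IsLinearMap ℂ fun b => m1 u b c
  m1_lin3 : ∀ u b, IsLinearMap ℂ fun c => m1 u b c
  m2_lin1 : ∀ u c, IsLinearMap ℂ fun a => m2 a u c
  m2_lin2 : ∀ a c, IsLinearMap ℂ fun u => m2 a u c
  m2_lin3 : ∀ a u, IsLinearMap ℂ fun c => m2 a u c
  m3_lin1 : ∀ b u, IsLinearMap ℂ fun a => m3 a b u
  m3_lin2 : ∀ a u, IsLinearMap ℂ fun b => m3 a b u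
  m3_lin3 : ∀ a b, IsLinearMap ℂ fun u => m3 a b u
  norm_tA : ∀ a b c, ‖tA a b c‖ ≤ ‖a‖ * ‖b‖ * ‖c‖
  norm_m1 : ∀ u b c, ‖m1 u b c‖ ≤ ‖u‖ * ‖b‖ * ‖c‖
  norm_m2 : ∀ a u c, ‖m2 a u c‖ ≤ ‖a‖ * ‖u‖ * ‖c‖
  norm_m3 : ∀ a b u, ‖m3 a b u‖ ≤ ‖a‖ * ‖b‖ * ‖u‖

/-- A ternary derivation: a `ℂ`-linear map satisfying the ternary Leibniz rule. -/
def IsTernaryDerivation {A X : Type*}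
    [NormedAddCommGroup A] [NormedSpace ℂ A]
    [NormedAddCommGroup X] [NormedSpace ℂ X]
    (S : TernarySystem A X) (D : A → X) : Prop :=
  IsLinearMap ℂ D ∧
  ∀ x y z : A, D (S.tA x y z) = S.m1 (D x) y z + S.m2 x (D y) z + S.m3 x y (D z)

/-- A Jordan ternary derivation: a `ℂ`-linear map satisfying the Leibniz rule
on cubes. -/
def IsJordanTernaryDerivation {A X : Type*}
    [NormedAddCommGroup A] [NormedSpace ℂ A]
    [NormedAddCommGroup X] [NormedSpace ℂ X]
    (S : TernarySystem A X) (D : A → X) : Prop :=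
  IsLinearMap ℂ D ∧
  ∀ x : A, D (S.tA x x x) = S.m1 (D x) x x + S.m2 x (D x) x + S.m3 x x (D x)

/-!
The Jensen-type inequality with `μ = 1`, `y = z = 0` says that `3 f(x/3)` is within `θ‖x‖^p`
of `f x`, so `D x = lim 3⁻ⁿ f(3ⁿ x)` exists: consecutive terms differ by `O((3^(p-1))ⁿ)`.
Summing the geometric series, `‖f x - D x‖ ≤ 3^(p-1)/(1 - 3^(p-1)) θ‖x‖^p`, and this constant
is at most `2^p/(2 - 2^p)`. Rescaling both defining inequalities by `3ⁿ` turns their right-hand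
sides into `O((3^(p-1))ⁿ)`, so in the limit `D` is additive, commutes with unimodular scalars
and satisfies the Leibniz rule. Every complex number of modulus at most `2` is a sum of two
unimodular ones, which upgrades the unimodular homogeneity to `ℂ`-linearity. Uniqueness: two
linear maps within `O(‖x‖^p)` of `f` differ at `x` by `3⁻ⁿ O(3ⁿᵖ)`, which tends to `0`.
-/

open Filter Topology

lemma exists_norm_eq_one_add_eq_of_norm_le_two {c : ℂ} (hc : ‖c‖ ≤ 2) :
    ∃ μ ν : ℂ, ‖μ‖ = 1 ∧ ‖ν‖ = 1 ∧ μ + ν = c := by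
  set β := Real.arccos (‖c‖ / 2)
  refine ⟨Complex.exp ((c.arg + β : ℝ) * Complex.I), Complex.exp ((c.arg - β : ℝ) * Complex.I),
    Complex.norm_exp_ofReal_mul_I _, Complex.norm_exp_ofReal_mul_I _, ?_⟩
  have hcos : 2 * Real.cos β = ‖c‖ := by
    rw [Real.cos_arccos (by linarith [norm_nonneg c]) (by linarith)]; ring
  calc _ = Complex.exp (c.arg * Complex.I) * (2 * Complex.cos β) := by
        rw [Complex.two_cos, mul_add, ← Complex.exp_add, ← Complex.exp_add]
        push_cast; ring_nf
    _ = c := by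
        rw [← Complex.ofReal_cos, ← Complex.ofReal_ofNat, ← Complex.ofReal_mul, hcos, mul_comm,
          Complex.norm_mul_exp_arg_mul_I]

lemma isLinearMap_of_map_add_of_map_unit_smul {E F : Type*} [AddCommGroup E] [Module ℂ E]
    [AddCommGroup F] [Module ℂ F] {D : E → F} (hadd : ∀ x y, D (x + y) = D x + D y)
    (hunit : ∀ μ : ℂ, ‖μ‖ = 1 → ∀ x, D (μ • x) = μ • D x) : IsLinearMap ℂ D := by
  have hsmall : ∀ c : ℂ, ‖c‖ ≤ 2 → ∀ x, D (c • x) = c • D x := by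
    intro c hc x
    obtain ⟨μ, ν, hμ, hν, rfl⟩ := exists_norm_eq_one_add_eq_of_norm_le_two hc
    rw [add_smul, hadd, hunit μ hμ, hunit ν hν, add_smul]
  have hnat : ∀ (n : ℕ) x, D ((n : ℂ) • x) = (n : ℂ) • D x := by
    intro n x
    simpa only [Nat.cast_smul_eq_nsmul, AddMonoidHom.mk'_apply] using
      map_nsmul (AddMonoidHom.mk' D hadd) n x
  refine ⟨hadd, fun c x => ?_⟩
  set n : ℕ := ⌈‖c‖⌉₊ + 1
  have hn : (n : ℂ) ≠ 0 := by exact_mod_cast n.succ_ne_zero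
  have hcn : ‖c / n‖ ≤ 2 := by
    rw [norm_div, Complex.norm_natCast, div_le_iff₀ (by positivity)]
    have := Nat.le_ceil ‖c‖
    push_cast [n]; nlinarith [norm_nonneg c]
  have hc : c = n * (c / n) := (mul_div_cancel₀ c hn).symm
  rw [hc, mul_smul, hnat, hsmall _ hcn, ← mul_smul]

lemma three_rpow_sub_one_lt_one {p : ℝ} (hp : p < 1) : (3 : ℝ) ^ (p - 1) < 1 :=
  Real.rpow_lt_one_of_one_lt_of_neg (by norm_num) (by linarith)

lemma three_rpow_sub_one_div_le (p : ℝ) (hp : p < 1) :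
    (3 : ℝ) ^ (p - 1) / (1 - (3 : ℝ) ^ (p - 1)) ≤ (2 : ℝ) ^ p / (2 - (2 : ℝ) ^ p) := by
  have h2 : (2 : ℝ) ^ p = 2 * (2 : ℝ) ^ (p - 1) := by
    rw [Real.rpow_sub two_pos, Real.rpow_one]; ring
  have h32 : (3 : ℝ) ^ (p - 1) ≤ (2 : ℝ) ^ (p - 1) :=
    Real.rpow_le_rpow_of_nonpos two_pos (by norm_num) (by linarith)
  have h1 : (2 : ℝ) ^ (p - 1) < 1 := Real.rpow_lt_one_of_one_lt_of_neg one_lt_two (by linarith)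
  have h0 : (0 : ℝ) < (3 : ℝ) ^ (p - 1) := by positivity
  rw [h2, div_le_div_iff₀ (by linarith) (by linarith)]
  nlinarith

lemma eq_zero_of_tendsto_of_norm_le_geometric {E : Type*} [NormedAddCommGroup E]
    {u : ℕ → E} {L : E} {C r : ℝ} (hr0 : 0 ≤ r) (hr1 : r < 1) (hu : Tendsto u atTop (𝓝 L))
    (hle : ∀ n, ‖u n‖ ≤ C * r ^ n) : L = 0 := by
  have hC : Tendsto (fun n => C * r ^ n) atTop (𝓝 0) := by
    simpa using (tendsto_pow_atTop_nhds_zero_of_lt_one hr0 hr1).const_mul C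
  exact norm_le_zero_iff.mp (le_of_tendsto_of_tendsto' hu.norm hC hle)

section Hyers

variable {A X : Type*} [NormedAddCommGroup A] [NormedSpace ℂ A]
  [NormedAddCommGroup X] [NormedSpace ℂ X]

lemma norm_three_pow_smul_rpow (n : ℕ) (v : A) (p : ℝ) :
    ‖(3 : ℂ) ^ n • v‖ ^ p = ((3 : ℝ) ^ p) ^ n * ‖v‖ ^ p := by
  rw [norm_smul, norm_pow, Complex.norm_ofNat, Real.mul_rpow (by positivity) (norm_nonneg v),
    Real.rpow_pow_comm (by norm_num)]

lemma norm_inv_three_pow_smul_le {v : X} {m n : ℕ} {p C : ℝ} (hnm : n ≤ m)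
    (h : ‖v‖ ≤ ((3 : ℝ) ^ p) ^ n * C) : ‖((3 : ℂ) ^ m)⁻¹ • v‖ ≤ C * ((3 : ℝ) ^ (p - 1)) ^ n := by
  have hr : ((3 : ℝ) ^ (p - 1)) ^ n = ((3 : ℝ) ^ n)⁻¹ * ((3 : ℝ) ^ p) ^ n := by
    rw [Real.rpow_sub_one (by norm_num), div_pow, div_eq_inv_mul]
  rw [norm_smul, norm_inv, norm_pow, Complex.norm_ofNat, hr, mul_comm C, mul_assoc]
  gcongr
  norm_num

noncomputable def hyersSeq (f : A → X) (n : ℕ) (x : A) : X :=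
  ((3 : ℂ) ^ n)⁻¹ • f ((3 : ℂ) ^ n • x)

noncomputable def hyersLimit (f : A → X) (x : A) : X :=
  limUnder atTop fun n => hyersSeq f n x

lemma hyersSeq_zero (f : A → X) : hyersSeq f 0 = f := by
  ext x; simp [hyersSeq]

variable {f : A → X} {p θ : ℝ}

lemma norm_smul_hyersSeq_sub_hyersSeq_succ_le {μ : ℂ}
    (hf : ∀ x, ‖(3 : ℂ) • μ • f ((3 : ℂ)⁻¹ • x) - f (μ • x)‖ ≤ θ * ‖x‖ ^ p) (u : A) (n : ℕ) :
    ‖μ • hyersSeq f n u - hyersSeq f (n + 1) (μ • u)‖ ≤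
      (3 : ℝ) ^ (p - 1) * θ * ‖u‖ ^ p * ((3 : ℝ) ^ (p - 1)) ^ n := by
  have hx : (3 : ℂ)⁻¹ • (3 : ℂ) ^ (n + 1) • u = (3 : ℂ) ^ n • u := by
    rw [smul_smul, pow_succ, mul_comm, mul_inv_cancel_right₀ (by norm_num)]
  have key : μ • hyersSeq f n u - hyersSeq f (n + 1) (μ • u) = ((3 : ℂ) ^ (n + 1))⁻¹ •
      ((3 : ℂ) • μ • f ((3 : ℂ)⁻¹ • (3 : ℂ) ^ (n + 1) • u) - f (μ • (3 : ℂ) ^ (n + 1) • u)) := by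
    simp only [hyersSeq, hx, smul_sub, smul_smul, smul_comm μ ((3 : ℂ) ^ (n + 1)) u]
    congr 2
    field_simp
    ring
  rw [key]
  calc _ ≤ θ * ‖u‖ ^ p * ((3 : ℝ) ^ (p - 1)) ^ (n + 1) :=
        norm_inv_three_pow_smul_le le_rfl
          ((hf _).trans_eq (by rw [norm_three_pow_smul_rpow]; ring))
    _ = _ := by ring

lemma dist_hyersSeq_succ_le (hf : ∀ x, ‖(3 : ℂ) • f ((3 : ℂ)⁻¹ • x) - f x‖ ≤ θ * ‖x‖ ^ p)
    (u : A) (n : ℕ) : dist (hyersSeq f n u) (hyersSeq f (n + 1) u) ≤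
      (3 : ℝ) ^ (p - 1) * θ * ‖u‖ ^ p * ((3 : ℝ) ^ (p - 1)) ^ n := by
  simpa [dist_eq_norm] using
    norm_smul_hyersSeq_sub_hyersSeq_succ_le (μ := 1) (by simpa using hf) u n

lemma eq_of_isLinearMap_of_norm_sub_le {D D' : A → X} (hD : IsLinearMap ℂ D)
    (hD' : IsLinearMap ℂ D') {K : ℝ} (hp : p < 1) (h : ∀ x, ‖f x - D x‖ ≤ K * ‖x‖ ^ p)
    (h' : ∀ x, ‖f x - D' x‖ ≤ K * ‖x‖ ^ p) : D = D' := by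
  funext x
  refine sub_eq_zero.mp (eq_zero_of_tendsto_of_norm_le_geometric (C := 2 * K * ‖x‖ ^ p)
    (by positivity) (three_rpow_sub_one_lt_one hp) tendsto_const_nhds fun n => ?_)
  have hx : D x - D' x = ((3 : ℂ) ^ n)⁻¹ • (D ((3 : ℂ) ^ n • x) - D' ((3 : ℂ) ^ n • x)) := by
    rw [hD.map_smul, hD'.map_smul, ← smul_sub, inv_smul_smul₀ (by norm_num)]
  refine hx ▸ norm_inv_three_pow_smul_le le_rfl ?_
  calc ‖D ((3 : ℂ) ^ n • x) - D' ((3 : ℂ) ^ n • x)‖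
      ≤ ‖f ((3 : ℂ) ^ n • x) - D ((3 : ℂ) ^ n • x)‖ + ‖f ((3 : ℂ) ^ n • x) - D' ((3 : ℂ) ^ n • x)‖ :=
        norm_sub_le_norm_sub_add_norm_sub .. |>.trans_eq (by rw [norm_sub_rev])
    _ ≤ K * ‖(3 : ℂ) ^ n • x‖ ^ p + K * ‖(3 : ℂ) ^ n • x‖ ^ p := add_le_add (h _) (h' _)
    _ = _ := by rw [norm_three_pow_smul_rpow]; ring

variable [CompleteSpace X]

lemma tendsto_hyersLimit (hp : p < 1)
    (hf : ∀ x, ‖(3 : ℂ) • f ((3 : ℂ)⁻¹ • x) - f x‖ ≤ θ * ‖x‖ ^ p) (u : A) :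
    Tendsto (fun n => hyersSeq f n u) atTop (𝓝 (hyersLimit f u)) :=
  (cauchySeq_of_le_geometric _ _ (three_rpow_sub_one_lt_one hp)
    (dist_hyersSeq_succ_le hf u)).tendsto_limUnder

lemma norm_sub_hyersLimit_le (hp : p < 1)
    (hf : ∀ x, ‖(3 : ℂ) • f ((3 : ℂ)⁻¹ • x) - f x‖ ≤ θ * ‖x‖ ^ p) (u : A) :
    ‖f u - hyersLimit f u‖ ≤
      (3 : ℝ) ^ (p - 1) / (1 - (3 : ℝ) ^ (p - 1)) * (θ * ‖u‖ ^ p) := by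
  have h := dist_le_of_le_geometric_of_tendsto₀ _ _ (three_rpow_sub_one_lt_one hp)
    (dist_hyersSeq_succ_le hf u) (tendsto_hyersLimit hp hf u)
  rw [hyersSeq_zero, dist_eq_norm] at h
  exact h.trans_eq (by ring)

lemma hyersLimit_add (hp : p < 1)
    (hf : ∀ x, ‖(3 : ℂ) • f ((3 : ℂ)⁻¹ • x) - f x‖ ≤ θ * ‖x‖ ^ p)
    (hadd : ∀ a b, ‖f a + f b - f (a + b)‖ ≤ θ * (‖a + b‖ ^ p + ‖a - b‖ ^ p + ‖a‖ ^ p))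
    (a b : A) : hyersLimit f (a + b) = hyersLimit f a + hyersLimit f b := by
  have hlim := ((tendsto_hyersLimit hp hf a).add (tendsto_hyersLimit hp hf b)).sub
    (tendsto_hyersLimit hp hf (a + b))
  refine (sub_eq_zero.mp (eq_zero_of_tendsto_of_norm_le_geometric
    (C := θ * (‖a + b‖ ^ p + ‖a - b‖ ^ p + ‖a‖ ^ p)) (by positivity)
    (three_rpow_sub_one_lt_one hp) hlim fun n => ?_)).symm
  have h := hadd ((3 : ℂ) ^ n • a) ((3 : ℂ) ^ n • b)
  rw [← smul_add, ← smul_sub, norm_three_pow_smul_rpow, norm_three_pow_smul_rpow,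
    norm_three_pow_smul_rpow] at h
  have e : hyersSeq f n a + hyersSeq f n b - hyersSeq f n (a + b) = ((3 : ℂ) ^ n)⁻¹ •
      (f ((3 : ℂ) ^ n • a) + f ((3 : ℂ) ^ n • b) - f ((3 : ℂ) ^ n • (a + b))) := by
    simp only [hyersSeq, smul_add, smul_sub]
  rw [e]
  exact norm_inv_three_pow_smul_le le_rfl (h.trans_eq (by ring))

lemma hyersLimit_smul {μ : ℂ} (hp : p < 1)
    (hf : ∀ x, ‖(3 : ℂ) • f ((3 : ℂ)⁻¹ • x) - f x‖ ≤ θ * ‖x‖ ^ p)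
    (hμ : ∀ x, ‖(3 : ℂ) • μ • f ((3 : ℂ)⁻¹ • x) - f (μ • x)‖ ≤ θ * ‖x‖ ^ p) (u : A) :
    hyersLimit f (μ • u) = μ • hyersLimit f u :=
  (sub_eq_zero.mp (eq_zero_of_tendsto_of_norm_le_geometric (by positivity)
    (three_rpow_sub_one_lt_one hp) (((tendsto_hyersLimit hp hf u).const_smul μ).sub
      ((tendsto_hyersLimit hp hf (μ • u)).comp (tendsto_add_atTop_nat 1)))
    (norm_smul_hyersSeq_sub_hyersSeq_succ_le hμ u))).symm

end Hyers

namespace TernarySystem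

variable {A X : Type*} [NormedAddCommGroup A] [NormedSpace ℂ A]
  [NormedAddCommGroup X] [NormedSpace ℂ X] (S : TernarySystem A X)

lemma tA_smul_smul_smul (k : ℂ) (a b c : A) :
    S.tA (k • a) (k • b) (k • c) = k ^ 3 • S.tA a b c := by
  rw [(S.tA_lin1 _ _).map_smul, (S.tA_lin2 _ _).map_smul, (S.tA_lin3 _ _).map_smul,
    smul_smul, smul_smul, pow_three']

lemma inv_pow_three_smul_m1 {k : ℂ} (hk : k ≠ 0) (u : X) (b c : A) :
    (k ^ 3)⁻¹ • S.m1 u (k • b) (k • c) = S.m1 (k⁻¹ • u) b c := by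
  rw [(S.m1_lin3 _ _).map_smul, (S.m1_lin2 _ _).map_smul, (S.m1_lin1 _ _).map_smul,
    smul_smul, smul_smul]
  congr 1
  field_simp

lemma inv_pow_three_smul_m2 {k : ℂ} (hk : k ≠ 0) (a : A) (u : X) (c : A) :
    (k ^ 3)⁻¹ • S.m2 (k • a) u (k • c) = S.m2 a (k⁻¹ • u) c := by
  rw [(S.m2_lin3 _ _).map_smul, (S.m2_lin1 _ _).map_smul, (S.m2_lin2 _ _).map_smul,
    smul_smul, smul_smul]
  congr 1
  field_simp

lemma inv_pow_three_smul_m3 {k : ℂ} (hk : k ≠ 0) (a b : A) (u : X) :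
    (k ^ 3)⁻¹ • S.m3 (k • a) (k • b) u = S.m3 a b (k⁻¹ • u) := by
  rw [(S.m3_lin2 _ _).map_smul, (S.m3_lin1 _ _).map_smul, (S.m3_lin3 _ _).map_smul,
    smul_smul, smul_smul]
  congr 1
  field_simp

lemma continuous_m1 (b c : A) : Continuous fun u => S.m1 u b c :=
  AddMonoidHomClass.continuous_of_bound (IsLinearMap.mk' _ (S.m1_lin1 b c)) (‖b‖ * ‖c‖) fun u =>
    (S.norm_m1 u b c).trans_eq (by ring)

lemma continuous_m2 (a c : A) : Continuous fun u => S.m2 a u c :=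
  AddMonoidHomClass.continuous_of_bound (IsLinearMap.mk' _ (S.m2_lin2 a c)) (‖a‖ * ‖c‖) fun u =>
    (S.norm_m2 a u c).trans_eq (by ring)

lemma continuous_m3 (a b : A) : Continuous fun u => S.m3 a b u :=
  AddMonoidHomClass.continuous_of_bound (IsLinearMap.mk' _ (S.m3_lin3 a b)) (‖a‖ * ‖b‖) fun u =>
    S.norm_m3 a b u

end TernarySystem

lemma hyersLimit_leibniz {A X : Type*} [NormedAddCommGroup A] [NormedSpace ℂ A]
    [NormedAddCommGroup X] [NormedSpace ℂ X] [CompleteSpace X] (S : TernarySystem A X)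
    {f : A → X} {p θ : ℝ} (hp : p < 1)
    (hf : ∀ x, ‖(3 : ℂ) • f ((3 : ℂ)⁻¹ • x) - f x‖ ≤ θ * ‖x‖ ^ p)
    (hder : ∀ a b c, ‖f (S.tA a b c) - S.m1 (f a) b c - S.m2 a (f b) c - S.m3 a b (f c)‖ ≤
      θ * (‖a‖ ^ p + ‖b‖ ^ p + ‖c‖ ^ p)) (a b c : A) :
    hyersLimit f (S.tA a b c) = S.m1 (hyersLimit f a) b c + S.m2 a (hyersLimit f b) c +
      S.m3 a b (hyersLimit f c) := by
  -- Index `3n` on `[a,b,c]` matches the cubic scaling `[3ⁿa,3ⁿb,3ⁿc] = 3³ⁿ[a,b,c]`.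
  have hlim := (((((tendsto_hyersLimit hp hf (S.tA a b c)).comp
      (StrictMono.tendsto_atTop fun m n (h : m < n) => by omega : Tendsto (· * 3) atTop atTop)).sub
    (((S.continuous_m1 b c).tendsto _).comp (tendsto_hyersLimit hp hf a))).sub
    (((S.continuous_m2 a c).tendsto _).comp (tendsto_hyersLimit hp hf b))).sub
    (((S.continuous_m3 a b).tendsto _).comp (tendsto_hyersLimit hp hf c)))
  have key := eq_zero_of_tendsto_of_norm_le_geometric (C := θ * (‖a‖ ^ p + ‖b‖ ^ p + ‖c‖ ^ p))
    (by positivity) (three_rpow_sub_one_lt_one hp) hlim fun n => ?_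
  · rw [← sub_eq_zero, ← key]
    abel
  have hk : (3 : ℂ) ^ n ≠ 0 := pow_ne_zero n three_ne_zero
  have e : hyersSeq f (n * 3) (S.tA a b c) - S.m1 (hyersSeq f n a) b c -
      S.m2 a (hyersSeq f n b) c - S.m3 a b (hyersSeq f n c) = ((3 : ℂ) ^ (n * 3))⁻¹ •
      (f (S.tA ((3 : ℂ) ^ n • a) ((3 : ℂ) ^ n • b) ((3 : ℂ) ^ n • c)) -
        S.m1 (f ((3 : ℂ) ^ n • a)) ((3 : ℂ) ^ n • b) ((3 : ℂ) ^ n • c) -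
        S.m2 ((3 : ℂ) ^ n • a) (f ((3 : ℂ) ^ n • b)) ((3 : ℂ) ^ n • c) -
        S.m3 ((3 : ℂ) ^ n • a) ((3 : ℂ) ^ n • b) (f ((3 : ℂ) ^ n • c))) := by
    rw [pow_mul, smul_sub, smul_sub, smul_sub, S.inv_pow_three_smul_m1 hk,
      S.inv_pow_three_smul_m2 hk, S.inv_pow_three_smul_m3 hk, S.tA_smul_smul_smul]
    simp only [hyersSeq, pow_mul]
  have h := hder ((3 : ℂ) ^ n • a) ((3 : ℂ) ^ n • b) ((3 : ℂ) ^ n • c)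
  rw [norm_three_pow_smul_rpow, norm_three_pow_smul_rpow, norm_three_pow_smul_rpow] at h
  simp only [Function.comp_apply]
  rw [e]
  exact norm_inv_three_pow_smul_le (by omega) (h.trans_eq (by ring))

def ApproxTernaryJensen {A X : Type*} [NormedAddCommGroup A] [NormedSpace ℂ A]
    [NormedAddCommGroup X] [NormedSpace ℂ X] (f : A → X) (p θ : ℝ) : Prop :=
  ∀ μ : ℂ, ‖μ‖ = 1 → ∀ x y z : A,
    ‖μ • f (((3 : ℂ)⁻¹) • (x + y + z)) + μ • f (((3 : ℂ)⁻¹) • (x - 2 • y + z)) +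
        μ • f (((3 : ℂ)⁻¹) • (x + y - 2 • z)) - f (μ • x)‖ ≤
      θ * (‖x‖ ^ p + ‖y‖ ^ p + ‖z‖ ^ p)

namespace ApproxTernaryJensen

variable {A X : Type*} [NormedAddCommGroup A] [NormedSpace ℂ A]
  [NormedAddCommGroup X] [NormedSpace ℂ X] {f : A → X} {p θ : ℝ}

lemma norm_smul_sub_le (hf : ApproxTernaryJensen f p θ) (hp : p ≠ 0) {μ : ℂ} (hμ : ‖μ‖ = 1)
    (x : A) : ‖(3 : ℂ) • μ • f ((3 : ℂ)⁻¹ • x) - f (μ • x)‖ ≤ θ * ‖x‖ ^ p := by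
  have h := hf μ hμ x 0 0
  simp only [add_zero, smul_zero, sub_zero, norm_zero, Real.zero_rpow hp] at h
  rwa [show ∀ v : X, v + v + v = (3 : ℂ) • v from fun v => by module] at h

lemma map_zero (hf : ApproxTernaryJensen f p θ) (hp : p ≠ 0) : f 0 = 0 := by
  have h := hf.norm_smul_sub_le hp (μ := 1) (by simp) 0
  have h2 : (2 : ℂ) • f 0 = 0 := by
    rw [show (2 : ℂ) • f 0 = (3 : ℂ) • f 0 - f 0 by module]
    simpa [Real.zero_rpow hp] using h
  exact (smul_eq_zero.mp h2).resolve_left two_ne_zero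

lemma norm_add_sub_le (hf : ApproxTernaryJensen f p θ) (hp : p ≠ 0) (a b : A) :
    ‖f a + f b - f (a + b)‖ ≤ θ * (‖a + b‖ ^ p + ‖a - b‖ ^ p + ‖a‖ ^ p) := by
  have h := hf 1 (by simp) (a + b) (a - b) a
  rw [show a + b + (a - b) + a = (3 : ℂ) • a by module,
    show a + b - 2 • (a - b) + a = (3 : ℂ) • b by module,
    show a + b + (a - b) - 2 • a = (0 : A) by module, inv_smul_smul₀ three_ne_zero,
    inv_smul_smul₀ three_ne_zero, smul_zero, hf.map_zero hp] at h
  simpa using h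

end ApproxTernaryJensen

theorem ternary_derivation_stability_rpow_general {A X : Type*}
    [NormedAddCommGroup A] [NormedSpace ℂ A]
    [NormedAddCommGroup X] [NormedSpace ℂ X] [CompleteSpace X]
    (S : TernarySystem A X)
    (f : A → X) (p θ : ℝ) (hp0 : 0 < p) (hp1 : p < 1) (hθ : 0 ≤ θ)
    (hf1 : ∀ (μ : ℂ), ‖μ‖ = 1 → ∀ x y z : A,
      ‖μ • f (((3 : ℂ)⁻¹) • (x + y + z)) + μ • f (((3 : ℂ)⁻¹) • (x - 2 • y + z)) +
          μ • f (((3 : ℂ)⁻¹) • (x + y - 2 • z)) - f (μ • x)‖ ≤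
        θ * (‖x‖ ^ p + ‖y‖ ^ p + ‖z‖ ^ p))
    (hf2 : ∀ a b c : A,
      ‖f (S.tA a b c) - S.m1 (f a) b c - S.m2 a (f b) c - S.m3 a b (f c)‖ ≤
        θ * (‖a‖ ^ p + ‖b‖ ^ p + ‖c‖ ^ p)) :
    ∃! D : A → X, IsTernaryDerivation S D ∧
      ∀ x : A, ‖f x - D x‖ ≤ ((2 : ℝ) ^ p * θ / (2 - (2 : ℝ) ^ p)) * ‖x‖ ^ p := by
  have hJ : ApproxTernaryJensen f p θ := hf1
  have hf : ∀ x, ‖(3 : ℂ) • f ((3 : ℂ)⁻¹ • x) - f x‖ ≤ θ * ‖x‖ ^ p := by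
    simpa using hJ.norm_smul_sub_le hp0.ne' (μ := 1) (by simp)
  have hlin : IsLinearMap ℂ (hyersLimit f) :=
    isLinearMap_of_map_add_of_map_unit_smul (hyersLimit_add hp1 hf (hJ.norm_add_sub_le hp0.ne'))
      fun μ hμ => hyersLimit_smul hp1 hf (hJ.norm_smul_sub_le hp0.ne' hμ)
  have hbound : ∀ x, ‖f x - hyersLimit f x‖ ≤ ((2 : ℝ) ^ p * θ / (2 - (2 : ℝ) ^ p)) * ‖x‖ ^ p :=
    fun x => calc
      _ ≤ (3 : ℝ) ^ (p - 1) / (1 - (3 : ℝ) ^ (p - 1)) * (θ * ‖x‖ ^ p) :=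
        norm_sub_hyersLimit_le hp1 hf x
      _ ≤ (2 : ℝ) ^ p / (2 - (2 : ℝ) ^ p) * (θ * ‖x‖ ^ p) :=
        mul_le_mul_of_nonneg_right (three_rpow_sub_one_div_le p hp1) (by positivity)
      _ = _ := by ring
  refine ⟨hyersLimit f, ⟨⟨hlin, hyersLimit_leibniz S hp1 hf hf2⟩, hbound⟩, ?_⟩
  rintro D ⟨⟨hD, -⟩, hDf⟩
  exact eq_of_isLinearMap_of_norm_sub_le hD hlin hp1 hDf hbound

/-- Hyers–Ulam–Rassias stability of ternary derivations, `p ∈ (0,1)`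
(Corollary 2.4). -/
theorem ternary_derivation_stability_rpow {A X : Type*}
    [NormedAddCommGroup A] [NormedSpace ℂ A] [CompleteSpace A]
    [NormedAddCommGroup X] [NormedSpace ℂ X] [CompleteSpace X]
    (S : TernarySystem A X)
    (f : A → X) (p θ : ℝ) (hp0 : 0 < p) (hp1 : p < 1) (hθ : 0 ≤ θ)
    (hf1 : ∀ (μ : ℂ), ‖μ‖ = 1 → ∀ x y z : A,
      ‖μ • f (((3 : ℂ)⁻¹) • (x + y + z)) + μ • f (((3 : ℂ)⁻¹) • (x - 2 • y + z)) +
          μ • f (((3 : ℂ)⁻¹) • (x + y - 2 • z)) - f (μ • x)‖ ≤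
        θ * (‖x‖ ^ p + ‖y‖ ^ p + ‖z‖ ^ p))
    (hf2 : ∀ a b c : A,
      ‖f (S.tA a b c) - S.m1 (f a) b c - S.m2 a (f b) c - S.m3 a b (f c)‖ ≤
        θ * (‖a‖ ^ p + ‖b‖ ^ p + ‖c‖ ^ p)) :
    ∃! D : A → X, IsTernaryDerivation S D ∧
      ∀ x : A, ‖f x - D x‖ ≤ ((2 : ℝ) ^ p * θ / (2 - (2 : ℝ) ^ p)) * ‖x‖ ^ p :=
  ternary_derivation_stability_rpow_general S f p θ hp0 hp1 hθ hf1 hf2
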